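/- Model generation rule soundness: if A is a total assignment to the variables of a closed PCNF ψ = Q̂.φ such that every clause of φ is satisfied by A, then ψ is satisfiability-equivalent to Q̂.(φ ∨ C) where C is the cube (conjunction of literals) given by A; in particular Q̂.(φ ∨ C) is satisfiable iff ψ is. -/

import Mathlib

/-- Variables are natural numbers. -/
abbrev Var := Nat

/-- A literal: a variable with a polarity (`pos = true` means positive). -/
structure Lit where
  var : Var
  pos : Bool
deriving DecidableEq, Repr

abbrev Clause := List Lit
abbrev Cube := List Lit
abbrev CNF := List Clause

abbrev Assignment := Var → Bool

def Lit.eval (α : Assignment) (l : Lit) : Bool :=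
  if l.pos then α l.var else !(α l.var)

def Clause.eval (α : Assignment) (C : Clause) : Bool := C.any (Lit.eval α)

def Cube.evalCube (α : Assignment) (C : Cube) : Bool := C.all (Lit.eval α)

def CNF.eval (α : Assignment) (φ : CNF) : Bool := φ.all (Clause.eval α)

/-- A flat quantifier prefix: list of (quantifier, variable); `true` = ∃, `false` = ∀. -/
abbrev QPrefix := List (Bool × Var)

/-- Recursive semantics of closed prenex QBFs, relative to an ambient assignment `α`. -/
def QSat (α : Assignment) : QPrefix → (Assignment → Bool) → Prop
  | [], m => m α = true
  | (true, x) :: p, m => ∃ b, QSat (Function.update α x b) p m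
  | (false, x) :: p, m => ∀ b, QSat (Function.update α x b) p m

/-- Satisfiability of a closed prenex formula. -/
def Sat (L : QPrefix) (m : Assignment → Bool) : Prop :=
  QSat (fun _ => false) L m

def pvars (L : QPrefix) : List Var := L.map Prod.snd

/-- The quantifier of a variable in the prefix (`true` = ∃). -/
def quantOf (L : QPrefix) (x : Var) : Bool :=
  ((L.find? (fun p => p.2 == x)).map Prod.fst).getD true

/-- Position of a variable in the linear prefix ordering. -/
def varIdx (L : QPrefix) (x : Var) : Nat := (pvars L).idxOf x

def Clause.vars (C : Clause) : List Var := C.map Lit.var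
def CNF.vars (φ : CNF) : List Var := φ.flatMap Clause.vars

/-- A closed PCNF: all matrix variables are quantified, and no variable twice. -/
def Closed (L : QPrefix) (φ : CNF) : Prop :=
  (∀ v ∈ CNF.vars φ, v ∈ pvars L) ∧ (pvars L).Nodup

def existLits (L : QPrefix) (C : List Lit) : List Lit :=
  C.filter (fun l => quantOf L l.var)

def univLits (L : QPrefix) (C : List Lit) : List Lit :=
  C.filter (fun l => !(quantOf L l.var))

/-- Universal reduction of a clause: remove universal literals larger than all
existential literals of the clause. -/
def univRed (L : QPrefix) (C : Clause) : Clause :=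
  C.filter (fun l =>
    !((!(quantOf L l.var)) &&
      (existLits L C).all (fun l' => decide (varIdx L l'.var < varIdx L l.var))))

/-- Existential reduction of a cube: remove existential literals larger than all
universal literals of the cube. -/
def exRed (L : QPrefix) (C : Cube) : Cube :=
  C.filter (fun l =>
    !((quantOf L l.var) &&
      (univLits L C).all (fun l' => decide (varIdx L l'.var < varIdx L l.var))))

def Lit.neg (l : Lit) : Lit := ⟨l.var, !l.pos⟩

/-- Tautological clause / contradictory cube: contains complementary literals. -/
def Tauto (C : List Lit) : Prop := ∃ l ∈ C, Lit.neg l ∈ C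

/-- Tentative Q-qResolvent of two clauses on existential pivot `p`. -/
def qResolvent (L : QPrefix) (C₁ C₂ : Clause) (p : Var) : Clause :=
  (univRed L C₁).filter (fun l => l ≠ ⟨p, true⟩) ++
  (univRed L C₂).filter (fun l => l ≠ ⟨p, false⟩)

/-- Q-resolution derivations from the clauses of `φ`. -/
inductive QDer (L : QPrefix) (φ : CNF) : Clause → Prop
  | ax {C} : C ∈ φ → QDer L φ C
  | ur {C} : QDer L φ C → QDer L φ (univRed L C)
  | res {C₁ C₂} {p : Var} :
      QDer L φ C₁ → QDer L φ C₂ →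
      ¬ Tauto C₁ → ¬ Tauto C₂ →
      quantOf L p = true → (⟨p, true⟩ : Lit) ∈ C₁ → (⟨p, false⟩ : Lit) ∈ C₂ →
      ¬ Tauto (qResolvent L C₁ C₂ p) →
      QDer L φ (qResolvent L C₁ C₂ p)

/-- The initial cube of a (total) model `α`: conjunction of the literals set by `α`,
in prefix order. -/
def initCube (L : QPrefix) (α : Assignment) : Cube :=
  L.map (fun p => ⟨p.2, α p.2⟩)

/-- Tentative cube qResolvent of two cubes on universal pivot `x`. -/
def cubeResolvent (L : QPrefix) (C₁ C₂ : Cube) (x : Var) : Cube :=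
  (exRed L C₁).filter (fun l => l ≠ ⟨x, true⟩) ++
  (exRed L C₂).filter (fun l => l ≠ ⟨x, false⟩)

/-- Cube derivations: model generation rule, existential reduction, cube resolution. -/
inductive CubeDer (L : QPrefix) (φ : CNF) : Cube → Prop
  | init (α : Assignment) : CNF.eval α φ = true → CubeDer L φ (initCube L α)
  | er {C} : CubeDer L φ C → CubeDer L φ (exRed L C)
  | res {C₁ C₂} {x : Var} :
      CubeDer L φ C₁ → CubeDer L φ C₂ →
      ¬ Tauto C₁ → ¬ Tauto C₂ →
      quantOf L x = false → (⟨x, true⟩ : Lit) ∈ C₁ → (⟨x, false⟩ : Lit) ∈ C₂ →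
      ¬ Tauto (cubeResolvent L C₁ C₂ x) →
      CubeDer L φ (cubeResolvent L C₁ C₂ x)

/-- Block-structured prefix: list of (quantifier, block of variables). -/
abbrev BPrefix := List (Bool × List Var)

def flatP (P : BPrefix) : QPrefix := P.flatMap (fun b => b.2.map (fun x => (b.1, x)))

def SatB (P : BPrefix) (m : Assignment → Bool) : Prop := Sat (flatP P) m

/-- Closed PCNF with block prefix. -/
def ClosedB (P : BPrefix) (φ : CNF) : Prop :=
  (∀ v ∈ CNF.vars φ, v ∈ pvars (flatP P)) ∧
  (∀ v ∈ pvars (flatP P), v ∈ CNF.vars φ) ∧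
  (pvars (flatP P)).Nodup

/-!
The cube `C` of a model `A` is satisfied only by assignments that agree with `A` on every
prefix variable, hence on every variable of `φ`; such assignments satisfy `φ` as `A` does.
So `C` implies `φ`, the matrices `φ` and `φ ∨ C` are equal as Boolean functions, and the two
QBFs coincide.
-/

theorem Lit.eval_congr {α β : Assignment} {l : Lit} (h : α l.var = β l.var) :
    Lit.eval α l = Lit.eval β l := by
  simp only [Lit.eval, h]

theorem Clause.eval_congr {α β : Assignment} {C : Clause} (h : ∀ v ∈ Clause.vars C, α v = β v) :
    Clause.eval α C = Clause.eval β C := by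
  rw [Bool.eq_iff_iff, Clause.eval, Clause.eval, List.any_eq_true, List.any_eq_true]
  exact exists_congr fun l => and_congr_right fun hl => by
    rw [Lit.eval_congr (h l.var (List.mem_map_of_mem hl))]

theorem CNF.eval_congr {α β : Assignment} {φ : CNF} (h : ∀ v ∈ CNF.vars φ, α v = β v) :
    CNF.eval α φ = CNF.eval β φ := by
  rw [Bool.eq_iff_iff, CNF.eval, CNF.eval, List.all_eq_true, List.all_eq_true]
  exact forall₂_congr fun C hC => by
    rw [Clause.eval_congr fun v hv => h v (List.mem_flatMap.mpr ⟨C, hC, hv⟩)]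

theorem Lit.eval_mk_iff {α : Assignment} {v : Var} {b : Bool} :
    Lit.eval α ⟨v, b⟩ = true ↔ α v = b := by
  cases b <;> simp [Lit.eval]

theorem Cube.evalCube_initCube_iff {L : QPrefix} {α A : Assignment} :
    Cube.evalCube α (initCube L A) = true ↔ ∀ v ∈ pvars L, α v = A v := by
  simp only [Cube.evalCube, initCube, pvars, List.all_eq_true, List.forall_mem_map,
    Lit.eval_mk_iff]

theorem CNF.eval_of_evalCube_initCube {L : QPrefix} {φ : CNF} {A α : Assignment}
    (hvars : ∀ v ∈ CNF.vars φ, v ∈ pvars L) (hA : CNF.eval A φ = true)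
    (hα : Cube.evalCube α (initCube L A) = true) : CNF.eval α φ = true := by
  rwa [CNF.eval_congr fun v hv => Cube.evalCube_initCube_iff.mp hα v (hvars v hv)]

theorem CNF.eval_or_evalCube_initCube {L : QPrefix} {φ : CNF} {A : Assignment}
    (hvars : ∀ v ∈ CNF.vars φ, v ∈ pvars L) (hA : CNF.eval A φ = true) (α : Assignment) :
    (CNF.eval α φ || Cube.evalCube α (initCube L A)) = CNF.eval α φ := by
  cases hα : Cube.evalCube α (initCube L A)
  · simp
  · simp [CNF.eval_of_evalCube_initCube hvars hA hα]

/-- soundness of the model generation rule. -/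
theorem model_generation_sound (L : QPrefix) (φ : CNF) (A : Assignment)
    (hclosed : Closed L φ)
    (hA : CNF.eval A φ = true) :
    (Sat L (fun α => CNF.eval α φ) ↔ Sat L (fun α => CNF.eval α φ || Cube.evalCube α (initCube L A))) := by
  simp only [CNF.eval_or_evalCube_initCube hclosed.1 hA]
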